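/- The Euler decomposition of the qutrit Hadamard gate is not unique: there exist angles (α₁,α₂,α₃,α₄,α₅,α₆) ∈ [0,2π)⁶ with (α₁,α₂,α₃,α₄,α₅,α₆) ≠ (4π/3,4π/3,4π/3,4π/3,4π/3,4π/3) and a nonzero complex number z such that H = z · P_X(α₁,α₂) · P_Z(α₃,α₄) · P_X(α₅,α₆). -/
import Mathlib


open scoped Matrix

/-- ω = exp(2πi/3). -/
noncomputable def qutritOmega : ℂ := Complex.exp (2 * Real.pi * Complex.I / 3)

/-- The qutrit Hadamard gate, H_{jk} = ω^{jk}. -/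
noncomputable def qutritH : Matrix (Fin 3) (Fin 3) ℂ :=
  Matrix.of fun j k => qutritOmega ^ ((j : ℕ) * (k : ℕ))

/-- The Z-phase gate P_Z(α,β) = diag(1, e^{iα}, e^{iβ}). -/
noncomputable def PZ (α β : ℝ) : Matrix (Fin 3) (Fin 3) ℂ :=
  Matrix.diagonal ![1, Complex.exp (α * Complex.I), Complex.exp (β * Complex.I)]

/-- The X-phase gate P_X(α,β) = H · P_Z(α,β) · H⁻¹. -/
noncomputable def PX (α β : ℝ) : Matrix (Fin 3) (Fin 3) ℂ :=
  qutritH * PZ α β * qutritH⁻¹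

lemma omega_eq : qutritOmega = (-1 + (Real.sqrt 3 : ℂ) * Complex.I) / 2 := by
  have h : (2 * Real.pi * Complex.I / 3) = ((2 * Real.pi / 3 : ℝ) : ℂ) * Complex.I := by
    push_cast; ring
  rw [qutritOmega, h, Complex.exp_mul_I]
  have h23 : (2 * Real.pi / 3 : ℝ) = Real.pi - Real.pi / 3 := by ring
  rw [← Complex.ofReal_cos, ← Complex.ofReal_sin, h23, Real.cos_pi_sub, Real.sin_pi_sub,
    Real.cos_pi_div_three, Real.sin_pi_div_three]
  push_cast; ring

lemma omega_sum : qutritOmega ^ 2 + qutritOmega + 1 = 0 := by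
  have hs : (Real.sqrt 3 : ℂ) ^ 2 = 3 := by
    norm_cast
    rw [Real.sq_sqrt]; norm_num
  rw [omega_eq]
  have hI : Complex.I ^ 2 = -1 := Complex.I_sq
  linear_combination (Complex.I ^ 2 / 4) * hs + (3 / 4) * hI

lemma omega_pow3 : qutritOmega ^ 3 = 1 := by
  linear_combination (qutritOmega - 1) * omega_sum

lemma H_eq : qutritH =
    !![1, 1, 1; 1, qutritOmega, qutritOmega ^ 2; 1, qutritOmega ^ 2, qutritOmega] := by
  have h4 : qutritOmega ^ 4 = qutritOmega := by
    linear_combination (qutritOmega ^ 2 - qutritOmega) * omega_sum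
  ext i j
  fin_cases i <;> fin_cases j <;>
    simp [qutritH, Matrix.vecHead, Matrix.vecTail, h4]

noncomputable def Binv : Matrix (Fin 3) (Fin 3) ℂ :=
  (1/3 : ℂ) • !![1, 1, 1; 1, qutritOmega ^ 2, qutritOmega; 1, qutritOmega, qutritOmega ^ 2]

lemma omega_pow2 : qutritOmega ^ 2 = -1 - qutritOmega := by
  linear_combination omega_sum

lemma omega_pow4 : qutritOmega ^ 4 = qutritOmega := by
  linear_combination (qutritOmega ^ 2 - qutritOmega) * omega_sum

lemma omega_pow5 : qutritOmega ^ 5 = -1 - qutritOmega := by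
  linear_combination (qutritOmega ^ 3 - qutritOmega ^ 2 + 1) * omega_sum

lemma omega_pow6 : qutritOmega ^ 6 = 1 := by
  linear_combination (qutritOmega ^ 4 - qutritOmega ^ 3 + qutritOmega - 1) * omega_sum

lemma omega_pow7 : qutritOmega ^ 7 = qutritOmega := by
  linear_combination (qutritOmega ^ 5 - qutritOmega ^ 4 + qutritOmega ^ 2 - qutritOmega) * omega_sum

lemma omega_pow8 : qutritOmega ^ 8 = -1 - qutritOmega := by
  linear_combination (qutritOmega ^ 6 - qutritOmega ^ 5 + qutritOmega ^ 3 - qutritOmega ^ 2 + 1) * omega_sum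

lemma H_mul_B : qutritH * Binv = 1 := by
  ext i j
  fin_cases i <;> fin_cases j <;>
    simp [H_eq, Binv, Matrix.mul_apply, Fin.sum_univ_three, Matrix.one_apply] <;>
    (try (ring_nf
          simp only [omega_pow8, omega_pow7, omega_pow6, omega_pow5, omega_pow4, omega_pow3,
            omega_pow2])) <;>
    (try ring)

lemma omega_pow9 : qutritOmega ^ 9 = 1 := by
  linear_combination (qutritOmega ^ 7 - (1) * qutritOmega ^ 6 + qutritOmega ^ 4 - (1) * qutritOmega ^ 3 + qutritOmega - (1)) * omega_sum

lemma omega_pow10 : qutritOmega ^ 10 = qutritOmega := by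
  linear_combination (qutritOmega ^ 8 - (1) * qutritOmega ^ 7 + qutritOmega ^ 5 - (1) * qutritOmega ^ 4 + qutritOmega ^ 2 - (1) * qutritOmega) * omega_sum

lemma omega_pow11 : qutritOmega ^ 11 = -1 - qutritOmega := by
  linear_combination (qutritOmega ^ 9 - (1) * qutritOmega ^ 8 + qutritOmega ^ 6 - (1) * qutritOmega ^ 5 + qutritOmega ^ 3 - (1) * qutritOmega ^ 2 + 1) * omega_sum

lemma omega_pow12 : qutritOmega ^ 12 = 1 := by
  linear_combination (qutritOmega ^ 10 - (1) * qutritOmega ^ 9 + qutritOmega ^ 7 - (1) * qutritOmega ^ 6 + qutritOmega ^ 4 - (1) * qutritOmega ^ 3 + qutritOmega - (1)) * omega_sum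


lemma Hinv_eq : qutritH⁻¹ = Binv := Matrix.inv_eq_right_inv H_mul_B

lemma PZ_zero_t : PZ 0 (2 * Real.pi / 3) = Matrix.diagonal ![1, 1, qutritOmega] := by
  have h1 : Complex.exp (((0:ℝ):ℂ) * Complex.I) = 1 := by norm_num
  have h2 : Complex.exp (((2 * Real.pi / 3 : ℝ):ℂ) * Complex.I) = qutritOmega := by
    rw [qutritOmega]; congr 1; push_cast; ring
  rw [PZ, h1, h2]

lemma PZ_t_zero : PZ (2 * Real.pi / 3) 0 = Matrix.diagonal ![1, qutritOmega, 1] := by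
  have h1 : Complex.exp (((0:ℝ):ℂ) * Complex.I) = 1 := by norm_num
  have h2 : Complex.exp (((2 * Real.pi / 3 : ℝ):ℂ) * Complex.I) = qutritOmega := by
    rw [qutritOmega]; congr 1; push_cast; ring
  rw [PZ, h1, h2]

noncomputable def M1mat : Matrix (Fin 3) (Fin 3) ℂ := !![((2:ℂ)/3 + (1/3) * qutritOmega), (-(1:ℂ)/3 - (2/3) * qutritOmega), ((2:ℂ)/3 + (1/3) * qutritOmega); ((2:ℂ)/3 + (1/3) * qutritOmega), ((2:ℂ)/3 + (1/3) * qutritOmega), (-(1:ℂ)/3 - (2/3) * qutritOmega); (-(1:ℂ)/3 - (2/3) * qutritOmega), ((2:ℂ)/3 + (1/3) * qutritOmega), ((2:ℂ)/3 + (1/3) * qutritOmega)]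

noncomputable def M2mat : Matrix (Fin 3) (Fin 3) ℂ := !![((2:ℂ)/3 + (1/3) * qutritOmega), ((2:ℂ)/3 + (1/3) * qutritOmega), (-(1:ℂ)/3 - (2/3) * qutritOmega); (-(1:ℂ)/3 - (2/3) * qutritOmega), ((2:ℂ)/3 + (1/3) * qutritOmega), ((2:ℂ)/3 + (1/3) * qutritOmega); ((2:ℂ)/3 + (1/3) * qutritOmega), (-(1:ℂ)/3 - (2/3) * qutritOmega), ((2:ℂ)/3 + (1/3) * qutritOmega)]

lemma M1_eq : qutritH * Matrix.diagonal ![1, 1, qutritOmega] * Binv = M1mat := by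
  ext i j
  fin_cases i <;> fin_cases j <;>
    simp [H_eq, Binv, M1mat, Matrix.mul_apply, Fin.sum_univ_three, Matrix.diagonal,
      Matrix.vecHead, Matrix.vecTail] <;>
      (try (ring_nf
            simp only [omega_pow12, omega_pow11, omega_pow10, omega_pow9, omega_pow8,
              omega_pow7, omega_pow6, omega_pow5, omega_pow4, omega_pow3, omega_pow2])) <;>
      (try ring)

lemma M2_eq : qutritH * Matrix.diagonal ![1, qutritOmega, 1] * Binv = M2mat := by
  ext i j
  fin_cases i <;> fin_cases j <;>
    simp [H_eq, Binv, M2mat, Matrix.mul_apply, Fin.sum_univ_three, Matrix.diagonal,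
      Matrix.vecHead, Matrix.vecTail] <;>
      (try (ring_nf
            simp only [omega_pow12, omega_pow11, omega_pow10, omega_pow9, omega_pow8,
              omega_pow7, omega_pow6, omega_pow5, omega_pow4, omega_pow3, omega_pow2])) <;>
      (try ring)

set_option maxHeartbeats 1000000 in
/-- The Euler decomposition of the qutrit Hadamard gate is not unique: there are
    angles in [0,2π)⁶, different from (4π/3,…,4π/3), which also give an Euler
    decomposition of H up to a nonzero global scalar. -/
theorem hadamard_euler_decomposition_not_unique :
    ∃ α₁ α₂ α₃ α₄ α₅ α₆ : ℝ,
      α₁ ∈ Set.Ico (0:ℝ) (2 * Real.pi) ∧ α₂ ∈ Set.Ico (0:ℝ) (2 * Real.pi) ∧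
      α₃ ∈ Set.Ico (0:ℝ) (2 * Real.pi) ∧ α₄ ∈ Set.Ico (0:ℝ) (2 * Real.pi) ∧
      α₅ ∈ Set.Ico (0:ℝ) (2 * Real.pi) ∧ α₆ ∈ Set.Ico (0:ℝ) (2 * Real.pi) ∧
      (α₁, α₂, α₃, α₄, α₅, α₆) ≠
        (4 * Real.pi / 3, 4 * Real.pi / 3, 4 * Real.pi / 3,
         4 * Real.pi / 3, 4 * Real.pi / 3, 4 * Real.pi / 3) ∧
      ∃ z : ℂ, z ≠ 0 ∧
        qutritH = z • (PX α₁ α₂ * PZ α₃ α₄ * PX α₅ α₆) := by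
  have hπ := Real.pi_pos
  refine ⟨0, 2 * Real.pi / 3, 2 * Real.pi / 3, 0, 2 * Real.pi / 3, 0,
    ⟨le_refl _, by linarith⟩, ⟨by linarith, by linarith⟩, ⟨by linarith, by linarith⟩,
    ⟨le_refl _, by linarith⟩, ⟨by linarith, by linarith⟩, ⟨le_refl _, by linarith⟩,
    ?_, 1 - qutritOmega, ?_, ?_⟩
  · simp only [ne_eq, Prod.mk.injEq, not_and]
    intro h; linarith
  · intro h
    have hω : qutritOmega = 1 := by
      have := sub_eq_zero.mp h
      linear_combination -this
    have := omega_sum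
    rw [hω] at this
    norm_num at this
  · rw [PX, PX, Hinv_eq, PZ_zero_t, PZ_t_zero, M1_eq, M2_eq]
    ext i j
    fin_cases i <;> fin_cases j <;>
      simp [H_eq, M1mat, M2mat, Matrix.mul_apply, Matrix.smul_apply, smul_eq_mul,
        Fin.sum_univ_three, Matrix.diagonal, Matrix.vecHead, Matrix.vecTail] <;>
      (try (ring_nf
            simp only [omega_pow12, omega_pow11, omega_pow10, omega_pow9, omega_pow8,
              omega_pow7, omega_pow6, omega_pow5, omega_pow4, omega_pow3, omega_pow2])) <;>
      (try ring)
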